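/- Let τ range over a finite set, p_θ(τ) > 0 differentiable in θ, S(τ) a stratum assignment with probabilities p_k(θ) = Pr_θ(S=k) > 0, μ_k(θ) = E_θ[R | S=k], σ_k(θ) > 0 the conditional standard deviation, and A_SAN(τ) = (R(τ) − μ_{S(τ)}(θ))/(σ_{S(τ)}(θ) + ε). Then E_θ[A_SAN(τ) · ∇_θ log p_θ(τ)] = ∑_k (p_k(θ)/(σ_k(θ)+ε)) · ∇_θ μ_k(θ). -/

import Mathlib

/-!
Split the expectation by stratum. Inside stratum `k` the weight `1 / (σ_k + ε)` is constant, and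
`∑_{S τ = k} (R τ - μ_k) ∂p(τ) = p_k ∂μ_k` is the quotient rule applied to
`μ_k = (∑_{S τ = k} p R) / p_k`, once `p ∂log p = ∂p` has turned the score into `∂p`.
-/

open Finset

noncomputable def weightedMean {ι : Type*} (s : Finset ι) (w R : ι → ℝ) : ℝ :=
  (∑ τ ∈ s, w τ * R τ) / ∑ τ ∈ s, w τ

theorem mul_deriv_div_of_hasDerivAt {N Z : ℝ → ℝ} {N' Z' x : ℝ} (hN : HasDerivAt N N' x)
    (hZ : HasDerivAt Z Z' x) (hZx : Z x ≠ 0) :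
    Z x * deriv (fun t => N t / Z t) x = N' - N x / Z x * Z' := by
  rw [(hN.fun_div hZ hZx).deriv]
  field_simp

theorem sum_sub_weightedMean_mul {ι : Type*} (s : Finset ι) (w R w' : ι → ℝ) :
    ∑ τ ∈ s, (R τ - weightedMean s w R) * w' τ
      = ∑ τ ∈ s, w' τ * R τ - weightedMean s w R * ∑ τ ∈ s, w' τ := by
  rw [mul_sum, ← sum_sub_distrib]
  exact sum_congr rfl fun τ _ => by ring

theorem mul_deriv_weightedMean {ι : Type*} (s : Finset ι) {p : ℝ → ι → ℝ} (R : ι → ℝ) {θ : ℝ}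
    (hp : ∀ τ ∈ s, DifferentiableAt ℝ (fun t => p t τ) θ) (hZ : ∑ τ ∈ s, p θ τ ≠ 0) :
    (∑ τ ∈ s, p θ τ) * deriv (fun t => weightedMean s (p t) R) θ
      = ∑ τ ∈ s, (R τ - weightedMean s (p θ) R) * deriv (fun t => p t τ) θ := by
  rw [sum_sub_weightedMean_mul]
  exact mul_deriv_div_of_hasDerivAt
    (HasDerivAt.fun_sum fun τ hτ => (hp τ hτ).hasDerivAt.mul_const (R τ))
    (HasDerivAt.fun_sum fun τ hτ => (hp τ hτ).hasDerivAt) hZ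

theorem population_san_expectation_general (Ω : Type*) [Fintype Ω] (I : ℕ)
    (p : ℝ → Ω → ℝ) (θ : ℝ) (R : Ω → ℝ) (S : Ω → Fin I) (ε : ℝ)
    (hpos : ∀ t τ, 0 < p t τ)
    (hdiff : ∀ τ, DifferentiableAt ℝ (fun t => p t τ) θ)
    (pk : ℝ → Fin I → ℝ) (μ : ℝ → Fin I → ℝ) (σ : Fin I → ℝ)
    (hpk : ∀ t k, pk t k = ∑ τ ∈ univ.filter (fun τ => S τ = k), p t τ)
    (hpkpos : ∀ k, 0 < pk θ k)
    (hμ : ∀ t k, μ t k =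
      (∑ τ ∈ univ.filter (fun τ => S τ = k), p t τ * R τ) / pk t k) :
    ∑ τ, p θ τ * (((R τ - μ θ (S τ)) / (σ (S τ) + ε))
        * deriv (fun t => Real.log (p t τ)) θ)
      = ∑ k, (pk θ k / (σ k + ε)) * deriv (fun t => μ t k) θ := by
  have hμ_eq (k : Fin I) :
      (fun t => μ t k) = fun t => weightedMean (univ.filter (fun τ => S τ = k)) (p t) R :=
    funext fun t => by rw [hμ, hpk]; rfl
  have hscore (τ : Ω) : p θ τ * deriv (fun t => Real.log (p t τ)) θ = deriv (fun t => p t τ) θ := by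
    rw [deriv.log (hdiff τ) (hpos θ τ).ne']
    field_simp [(hpos θ τ).ne']
  calc ∑ τ, p θ τ * (((R τ - μ θ (S τ)) / (σ (S τ) + ε)) * deriv (fun t => Real.log (p t τ)) θ)
      = ∑ k, ∑ τ ∈ univ.filter (fun τ => S τ = k),
          (σ k + ε)⁻¹ * ((R τ - μ θ k) * deriv (fun t => p t τ) θ) := by
        rw [← sum_fiberwise univ S]
        refine sum_congr rfl fun k _ => sum_congr rfl fun τ hτ => ?_
        rw [(mem_filter.mp hτ).2, ← hscore]
        ring
    _ = ∑ k, (pk θ k / (σ k + ε)) * deriv (fun t => μ t k) θ := by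
        refine sum_congr rfl fun k _ => ?_
        have hZ : ∑ τ ∈ univ.filter (fun τ => S τ = k), p θ τ ≠ 0 := hpk θ k ▸ (hpkpos k).ne'
        rw [← mul_sum, hμ_eq, congrFun (hμ_eq k) θ,
          ← mul_deriv_weightedMean _ R (fun τ _ => hdiff τ) hZ, ← hpk]
        ring

/-- Population SAN expectation: the expected product of the SAN advantage with the
score equals the weighted sum of within-stratum gradients,
`∑_k (p_k/(σ_k+ε)) ∇_θ μ_k(θ)`. -/
theorem population_san_expectation (Ω : Type*) [Fintype Ω] (I : ℕ)
    (p : ℝ → Ω → ℝ) (θ : ℝ) (R : Ω → ℝ) (S : Ω → Fin I) (ε : ℝ) (hε : 0 < ε)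
    (hpos : ∀ t τ, 0 < p t τ) (hsum : ∀ t, ∑ τ, p t τ = 1)
    (hdiff : ∀ τ, DifferentiableAt ℝ (fun t => p t τ) θ)
    (pk : ℝ → Fin I → ℝ) (μ : ℝ → Fin I → ℝ) (σ : Fin I → ℝ)
    (hpk : ∀ t k, pk t k = ∑ τ ∈ univ.filter (fun τ => S τ = k), p t τ)
    (hpkpos : ∀ k, 0 < pk θ k)
    (hμ : ∀ t k, μ t k =
      (∑ τ ∈ univ.filter (fun τ => S τ = k), p t τ * R τ) / pk t k)
    (hσ : ∀ k, σ k = Real.sqrt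
      ((∑ τ ∈ univ.filter (fun τ => S τ = k), p θ τ * (R τ - μ θ k) ^ 2) / pk θ k))
    (hσpos : ∀ k, 0 < σ k) :
    ∑ τ, p θ τ * (((R τ - μ θ (S τ)) / (σ (S τ) + ε))
        * deriv (fun t => Real.log (p t τ)) θ)
      = ∑ k, (pk θ k / (σ k + ε)) * deriv (fun t => μ t k) θ :=
  population_san_expectation_general Ω I p θ R S ε hpos hdiff pk μ σ hpk hpkpos hμ
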